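/- Let λ ∈ ℂ, λ ≠ 0, and let ℓ : (0, ∞) → ℂ be the half line ℓ(s) = λs. Then for every a ∈ ℂ with a ∉ λ·[0, ∞), the variation number satisfies α(ℓ, a) = |arg(a/λ) − π| / (2π), where the argument is chosen in the interval [0, 2π]. -/

import Mathlib

open Filter Topology Set MeasureTheory
open scoped ENNReal Real

/-- The variation number `α(γ|_{(t₀,∞)}, a)` of a curve `γ` around `a`. -/
noncomputable def variation (γ : ℝ → ℂ) (t0 : ℝ) (a : ℂ) : ℝ≥0∞ :=
  ENNReal.ofReal (1 / (2 * Real.pi)) *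
    ∫⁻ t in Set.Ioi t0, ENNReal.ofReal |(deriv γ t / (γ t - a)).im|

/-- An admissible curve on `(t₀, ∞)`: injective, `C²`, nonvanishing derivative, and with
`|γ(t)| = t + O(1)`, `|γ'(t)| = 1 + O(1/t)`, `|γ''(t)| = O(1/t²)` as `t → ∞`. -/
def Admissible (t0 : ℝ) (γ : ℝ → ℂ) : Prop :=
  Set.InjOn γ (Set.Ioi t0) ∧ ContDiffOn ℝ 2 γ (Set.Ioi t0) ∧
  (∀ t ∈ Set.Ioi t0, deriv γ t ≠ 0) ∧
  (∃ c : ℝ, ∀ᶠ t in Filter.atTop, |‖γ t‖ - t| ≤ c) ∧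
  (∃ c : ℝ, ∀ᶠ t in Filter.atTop, |‖deriv γ t‖ - 1| ≤ c / t) ∧
  (∃ c : ℝ, ∀ᶠ t in Filter.atTop, ‖deriv (deriv γ) t‖ ≤ c / t ^ 2)

/-- The argument of a complex number chosen in the interval `[0, 2π]`. -/
noncomputable def arg2pi (z : ℂ) : ℝ :=
  if Complex.arg z < 0 then Complex.arg z + 2 * Real.pi else Complex.arg z

/-! On the slit plane, the integrand `Im (γ' / (γ - a))` of the variation number is the derivative
of `t ↦ arg (γ t - a)`, so when that derivative has constant sign the variation number is the total
change of the argument divided by `2π`. Scaling by `λ⁻¹` turns the half line into `[0, ∞)` and `a`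
into `b = a / λ`; since `b ∉ [0, ∞)` the curve `t ↦ t - b` stays in the slit plane, its argument
moves monotonically (`Im (1 / (t - b)) = Im b / |t - b|²`) from `arg (-b) = arg₂π b - π` to `0`. -/

open Complex
open scoped ComplexOrder

lemma lintegral_Ioi_ofReal_abs_deriv_of_nonneg {g g' : ℝ → ℝ} {a m : ℝ}
    (hderiv : ∀ x ∈ Ici a, HasDerivAt g (g' x) x) (hpos : ∀ x ∈ Ioi a, 0 ≤ g' x)
    (hg : Tendsto g atTop (𝓝 m)) :
    ∫⁻ x in Ioi a, ENNReal.ofReal |g' x| = ENNReal.ofReal |m - g a| := by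
  have hFTC := integral_Ioi_of_hasDerivAt_of_nonneg' hderiv hpos hg
  have hm : 0 ≤ m - g a := hFTC ▸ setIntegral_nonneg measurableSet_Ioi hpos
  rw [setLIntegral_congr_fun measurableSet_Ioi fun x hx ↦ by rw [abs_of_nonneg (hpos x hx)],
    ← ofReal_integral_eq_lintegral_ofReal (integrableOn_Ioi_deriv_of_nonneg' hderiv hpos hg)
      ((ae_restrict_iff' measurableSet_Ioi).2 (ae_of_all _ hpos)), hFTC, abs_of_nonneg hm]

lemma lintegral_Ioi_ofReal_abs_deriv {g g' : ℝ → ℝ} {a m : ℝ}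
    (hderiv : ∀ x ∈ Ici a, HasDerivAt g (g' x) x)
    (hsign : (∀ x ∈ Ioi a, 0 ≤ g' x) ∨ ∀ x ∈ Ioi a, g' x ≤ 0)
    (hg : Tendsto g atTop (𝓝 m)) :
    ∫⁻ x in Ioi a, ENNReal.ofReal |g' x| = ENNReal.ofReal |m - g a| := by
  rcases hsign with hpos | hneg
  · exact lintegral_Ioi_ofReal_abs_deriv_of_nonneg hderiv hpos hg
  · simpa [abs_sub_comm, neg_add_eq_sub] using lintegral_Ioi_ofReal_abs_deriv_of_nonneg
      (fun x hx ↦ (hderiv x hx).neg) (fun x hx ↦ neg_nonneg.2 (hneg x hx)) hg.neg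

lemma HasDerivAt.arg_real {f : ℝ → ℂ} {f' : ℂ} {x : ℝ} (hf : HasDerivAt f f' x)
    (hx : f x ∈ slitPlane) : HasDerivAt (fun t ↦ arg (f t)) (f' / f x).im x := by
  simpa only [Function.comp_def, imCLM_apply, log_im] using
    imCLM.hasFDerivAt.comp_hasDerivAt x (hf.clog_real hx)

theorem variation_eq_of_tendsto_arg {γ : ℝ → ℂ} {t0 m : ℝ} {a : ℂ}
    (hγ : ∀ t ∈ Ici t0, DifferentiableAt ℝ γ t) (hslit : ∀ t ∈ Ici t0, γ t - a ∈ slitPlane)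
    (hsign : (∀ t ∈ Ioi t0, 0 ≤ (deriv γ t / (γ t - a)).im) ∨
      ∀ t ∈ Ioi t0, (deriv γ t / (γ t - a)).im ≤ 0)
    (harg : Tendsto (fun t ↦ arg (γ t - a)) atTop (𝓝 m)) :
    variation γ t0 a = ENNReal.ofReal (|m - arg (γ t0 - a)| / (2 * π)) := by
  have hderiv t (ht : t ∈ Ici t0) := ((hγ t ht).hasDerivAt.sub_const a).arg_real (hslit t ht)
  rw [variation, lintegral_Ioi_ofReal_abs_deriv hderiv hsign harg,
    ← ENNReal.ofReal_mul (by positivity), one_div_mul_eq_div]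

lemma variation_const_mul (γ : ℝ → ℂ) (t0 : ℝ) (a : ℂ) {l : ℂ} (hl : l ≠ 0) :
    variation (fun t ↦ l * γ t) t0 (l * a) = variation γ t0 a := by
  simp only [variation, deriv_const_mul_field', ← mul_sub, mul_div_mul_left _ _ hl]

lemma ofReal_sub_mem_slitPlane {b : ℂ} (hb : -b ∈ slitPlane) {t : ℝ} (ht : 0 ≤ t) :
    (t : ℂ) - b ∈ slitPlane := by
  rw [mem_slitPlane_iff] at hb ⊢
  simp only [sub_re, ofReal_re, sub_im, ofReal_im, zero_sub, neg_re, neg_im] at hb ⊢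
  rcases hb with hre | him
  exacts [Or.inl (by linarith), Or.inr him]

lemma tendsto_arg_ofReal_sub_atTop (b : ℂ) :
    Tendsto (fun t : ℝ ↦ arg (t - b)) atTop (𝓝 0) := by
  have hlim : Tendsto (fun t : ℝ ↦ 1 - b * (t : ℂ)⁻¹) atTop (𝓝 1) := by
    simpa using (tendsto_inv_atTop_zero.ofReal.const_mul b).const_sub (1 : ℂ)
  refine arg_one ▸ ((continuousAt_arg one_mem_slitPlane).tendsto.comp hlim).congr' ?_
  filter_upwards [eventually_gt_atTop 0] with t ht
  have ht' : (t : ℂ) ≠ 0 := ofReal_ne_zero.2 ht.ne'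
  rw [Function.comp_apply, ← arg_real_mul _ ht, mul_sub, mul_one, mul_left_comm,
    mul_inv_cancel₀ ht', mul_one]

lemma inv_ofReal_sub_im (b : ℂ) (t : ℝ) : ((t : ℂ) - b)⁻¹.im = b.im / normSq ((t : ℂ) - b) := by
  simp [inv_im]

lemma hasDerivAt_ofReal (t : ℝ) : HasDerivAt (fun t : ℝ ↦ (t : ℂ)) 1 t := by
  simpa using (hasDerivAt_id t).ofReal_comp

theorem variation_ofReal {b : ℂ} (hb : -b ∈ slitPlane) :
    variation (fun t : ℝ ↦ (t : ℂ)) 0 b = ENNReal.ofReal (|arg (-b)| / (2 * π)) := by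
  have hsign : (∀ t ∈ Ioi (0 : ℝ), 0 ≤ (deriv (fun t : ℝ ↦ (t : ℂ)) t / (t - b)).im) ∨
      ∀ t ∈ Ioi (0 : ℝ), (deriv (fun t : ℝ ↦ (t : ℂ)) t / (t - b)).im ≤ 0 := by
    simp only [fun t ↦ (hasDerivAt_ofReal t).deriv, one_div, inv_ofReal_sub_im]
    rcases le_total 0 b.im with h | h
    exacts [Or.inl fun t _ ↦ div_nonneg h (normSq_nonneg _),
      Or.inr fun t _ ↦ div_nonpos_of_nonpos_of_nonneg h (normSq_nonneg _)]
  simpa using variation_eq_of_tendsto_arg (fun t _ ↦ (hasDerivAt_ofReal t).differentiableAt)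
    (fun t ht ↦ ofReal_sub_mem_slitPlane hb ht) hsign (tendsto_arg_ofReal_sub_atTop b)

lemma arg2pi_sub_pi {b : ℂ} (hb : -b ∈ slitPlane) : arg2pi b - π = arg (-b) := by
  rw [arg2pi]
  split_ifs with h
  · rw [arg_neg_eq_arg_add_pi_of_im_neg (arg_neg_iff.1 h)]
    ring
  · refine (arg_neg_eq_arg_sub_pi_iff.2 ?_).symm
    rw [mem_slitPlane_iff, neg_re, neg_im, neg_pos, neg_ne_zero] at hb
    rcases (arg_nonneg_iff.1 (not_lt.1 h)).lt_or_eq with him | him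
    exacts [Or.inl him, Or.inr ⟨him.symm, hb.resolve_right (not_not.2 him.symm)⟩]

/-- **The Variation Number of a Half Line.**
For the half line `ℓ(s) = λs` (`λ ≠ 0`) and every `a ∉ λ·[0,∞)`,
`α(ℓ, a) = |arg(a/λ) - π|/(2π)` with the argument chosen in `[0, 2π]`. -/
theorem variation_number_half_line (l : ℂ) (hl : l ≠ 0) (a : ℂ)
    (ha : ∀ r : ℝ, 0 ≤ r → a ≠ l * (r : ℂ)) :
    variation (fun u : ℝ => l * (u : ℂ)) 0 a =
      ENNReal.ofReal (|arg2pi (a / l) - Real.pi| / (2 * Real.pi)) := by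
  have hslit : -(a / l) ∈ slitPlane := by
    rw [mem_slitPlane_iff_not_le_zero, neg_nonpos]
    intro h
    refine ha (a / l).re (Complex.nonneg_iff.1 h).1 ?_
    rw [← eq_re_of_ofReal_le (r := 0) (by simpa using h), mul_div_cancel₀ _ hl]
  rw [arg2pi_sub_pi hslit, ← variation_ofReal hslit, ← mul_div_cancel₀ a hl,
    variation_const_mul _ _ _ hl, mul_div_cancel₀ a hl]
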